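/- arXiv:1606.01534 — 2 statements merged into one kernel-verified Lean document; each statement's English description precedes it below -/
import Mathlib

section
/- Let δ' ∈ (0, δ) with δ ∈ (0,1), and set θ = 1 − N^{−δ'}. Under the measure P_1 (each non-ground edge e present independently with probability exp(−|e|)), for all sufficiently large N: E_1[ exp( θ · Σ_{e ∈ ℰ_N, |e| ≥ N^δ} |e| · 1_{e ∈ E(𝒢_N)} ) ] ≤ 2. -/
open MeasureTheory ProbabilityTheory
open scoped Classical

/-- The Euclidean length of an edge of a graph on `Fin N`. -/
def elen {N : ℕ} (e : Sym2 (Fin N)) : ℕ :=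
  Sym2.lift ⟨fun (x y : Fin N) => max (x : ℕ) (y : ℕ) - min (x : ℕ) (y : ℕ), fun a b => by
    simp [Nat.max_comm, Nat.min_comm]⟩ e

private lemma aux_tendsto {b : ℝ} (hb : 0 < b) :
    Filter.Tendsto (fun x : ℝ => x ^ (2 : ℕ) * Real.exp (-x ^ b)) Filter.atTop (nhds 0) := by
  set k : ℕ := ⌈(2 : ℝ) / b⌉₊ with hk
  have h1 : Filter.Tendsto (fun t : ℝ => t ^ k * Real.exp (-t)) Filter.atTop (nhds 0) :=
    Real.tendsto_pow_mul_exp_neg_atTop_nhds_zero k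
  have h2 : Filter.Tendsto (fun x : ℝ => x ^ b) Filter.atTop Filter.atTop :=
    tendsto_rpow_atTop hb
  have h3 : Filter.Tendsto (fun x : ℝ => (x ^ b) ^ k * Real.exp (-x ^ b))
      Filter.atTop (nhds 0) := h1.comp h2
  apply squeeze_zero' (f := fun x : ℝ => x ^ (2 : ℕ) * Real.exp (-x ^ b))
    (g := fun x : ℝ => (x ^ b) ^ k * Real.exp (-x ^ b)) ?_ ?_ h3
  · filter_upwards [Filter.eventually_ge_atTop (0 : ℝ)] with x hx
    positivity
  · filter_upwards [Filter.eventually_ge_atTop (1 : ℝ)] with x hx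
    have hx0 : (0 : ℝ) ≤ x := by linarith
    have h2bk : (2 : ℝ) ≤ b * k := by
      have := Nat.le_ceil ((2 : ℝ) / b)
      calc (2 : ℝ) = b * (2 / b) := by field_simp
        _ ≤ b * k := by gcongr
    refine mul_le_mul_of_nonneg_right ?_ (Real.exp_nonneg _)
    calc x ^ (2 : ℕ) = x ^ ((2 : ℕ) : ℝ) := (Real.rpow_natCast x 2).symm
      _ ≤ x ^ (b * k) := by
          apply Real.rpow_le_rpow_of_exponent_le hx
          simpa using h2bk
      _ = (x ^ b) ^ ((k : ℕ) : ℝ) := by rw [Real.rpow_mul hx0, Real.rpow_natCast]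
      _ = (x ^ b) ^ k := Real.rpow_natCast _ k

theorem stmt15 (δ δ' : ℝ) (hδ'0 : 0 < δ') (hδ'δ : δ' < δ) (hδ1 : δ < 1) :
    ∃ N₀ : ℕ, ∀ N ≥ N₀,
      ∀ (Ω : Type) [MeasurableSpace Ω] (P : Measure Ω) [IsProbabilityMeasure P]
        (G : Ω → SimpleGraph (Fin N)),
        (∀ ω (x y : Fin N), (x : ℕ) + 1 = (y : ℕ) → (G ω).Adj x y) →
        iIndepSet (fun e : {e : Sym2 (Fin N) // 1 < elen e} =>
          {ω | (e : Sym2 (Fin N)) ∈ (G ω).edgeSet}) P →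
        (∀ e : Sym2 (Fin N), 1 < elen e →
          P {ω | e ∈ (G ω).edgeSet} = ENNReal.ofReal (Real.exp (-(elen e : ℝ)))) →
        ∫ ω, Real.exp ((1 - (N : ℝ) ^ (-δ')) *
            ∑ e ∈ ((G ω).edgeSet.toFinite.toFinset).filter
              (fun e => (N : ℝ) ^ δ ≤ (elen e : ℝ)), (elen e : ℝ)) ∂P ≤ 2 := by
  have hb : 0 < δ - δ' := by linarith
  have hlog : 0 < Real.log 2 := Real.log_pos (by norm_num)
  have htend : Filter.Tendsto (fun N : ℕ => ((N : ℝ)) ^ (2 : ℕ) *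
      Real.exp (-(N : ℝ) ^ (δ - δ'))) Filter.atTop (nhds 0) :=
    (aux_tendsto hb).comp tendsto_natCast_atTop_atTop
  obtain ⟨M, hM⟩ := Filter.eventually_atTop.mp (htend.eventually_le_const hlog)
  refine ⟨max M 2, fun N hN Ω _ P _ G hground hindep hprob => ?_⟩
  have hNM : M ≤ N := le_trans (le_max_left _ _) hN
  have hN2 : 2 ≤ N := le_trans (le_max_right _ _) hN
  have hNpos : (0 : ℝ) < N := by
    have : (0 : ℕ) < N := by omega
    exact_mod_cast this
  set ε : ℝ := (N : ℝ) ^ (-δ') with hεdef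
  have hε : 0 < ε := Real.rpow_pos_of_pos hNpos _
  set θ : ℝ := 1 - ε with hθdef
  set T : Finset (Sym2 (Fin N)) :=
    Finset.univ.filter (fun e : Sym2 (Fin N) => (N : ℝ) ^ δ ≤ (elen e : ℝ)) with hTdef
  have hNδ : (1 : ℝ) < (N : ℝ) ^ δ := by
    refine (Real.one_lt_rpow_iff_of_pos hNpos).mpr (Or.inl ⟨?_, by linarith⟩)
    exact_mod_cast by omega
  have hT1 : ∀ e ∈ T, 1 < elen e := by
    intro e he
    rw [hTdef, Finset.mem_filter] at he
    have : (1 : ℝ) < (elen e : ℝ) := lt_of_lt_of_le hNδ he.2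
    exact_mod_cast this
  have hTlen : ∀ e ∈ T, (N : ℝ) ^ δ ≤ (elen e : ℝ) := by
    intro e he
    rw [hTdef, Finset.mem_filter] at he
    exact he.2
  -- key measure factorization from independence
  have key : ∀ s : Finset (Sym2 (Fin N)), s ⊆ T →
      P (⋂ e ∈ s, {ω | e ∈ (G ω).edgeSet}) = ∏ e ∈ s, P {ω | e ∈ (G ω).edgeSet} := by
    intro s hs
    have hmem : ∀ x : {e // e ∈ s}, 1 < elen (x : Sym2 (Fin N)) := fun x => hT1 _ (hs x.2)
    set S : Finset {e : Sym2 (Fin N) // 1 < elen e} :=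
      s.attach.image (fun x => ⟨x.1, hmem x⟩) with hS
    have h1 : (⋂ i ∈ S, {ω | (i : Sym2 (Fin N)) ∈ (G ω).edgeSet})
        = ⋂ e ∈ s, {ω | e ∈ (G ω).edgeSet} := by
      ext ω
      simp only [Set.mem_iInter, hS, Finset.mem_image, Finset.mem_attach, true_and,
        Set.mem_setOf_eq]
      constructor
      · intro h e he
        exact h ⟨e, hT1 e (hs he)⟩ ⟨⟨e, he⟩, rfl⟩
      · rintro h i ⟨x, rfl⟩
        exact h x.1 x.2
    have h2 := hindep.meas_biInter S
    rw [h1] at h2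
    have h3 : ∏ i ∈ S, P {ω | (i : Sym2 (Fin N)) ∈ (G ω).edgeSet}
        = ∏ x ∈ s.attach, P {ω | (x : Sym2 (Fin N)) ∈ (G ω).edgeSet} := by
      rw [hS]
      exact Finset.prod_image (fun x _ y _ hxy => Subtype.ext (Subtype.mk_eq_mk.mp hxy))
    rw [h2, h3, Finset.prod_attach s (fun e => P {ω | e ∈ (G ω).edgeSet})]
  set F : Sym2 (Fin N) → ℝ := fun e => Real.exp (θ * (elen e : ℝ)) with hFdef
  set hfun : Ω → ℝ := fun ω => ∑ s ∈ T.powerset,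
    (toMeasurable P (⋂ e ∈ s, {ω' | e ∈ (G ω').edgeSet})).indicator
      (fun _ => ∏ e ∈ s, F e) ω with hhdef
  have hFnn : ∀ e, (0 : ℝ) ≤ F e := fun e => (Real.exp_pos _).le
  have hintegrable : ∀ s ∈ T.powerset, Integrable
      ((toMeasurable P (⋂ e ∈ s, {ω' | e ∈ (G ω').edgeSet})).indicator
        (fun _ => ∏ e ∈ s, F e)) P := fun s _ =>
    (integrable_const _).indicator (measurableSet_toMeasurable _ _)
  have hint : Integrable hfun P := by
    rw [hhdef]
    exact integrable_finset_sum _ hintegrable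
  have hle : ∀ ω, Real.exp (θ * ∑ e ∈ ((G ω).edgeSet.toFinite.toFinset).filter
      (fun e => (N : ℝ) ^ δ ≤ (elen e : ℝ)), (elen e : ℝ)) ≤ hfun ω := by
    intro ω
    set s₀ : Finset (Sym2 (Fin N)) := T.filter (fun e => e ∈ (G ω).edgeSet) with hs₀def
    have hs₀T : s₀ ∈ T.powerset := Finset.mem_powerset.mpr (Finset.filter_subset _ _)
    have heq : ((G ω).edgeSet.toFinite.toFinset).filter
        (fun e => (N : ℝ) ^ δ ≤ (elen e : ℝ)) = s₀ := by
      rw [hs₀def, hTdef]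
      ext e
      simp only [Finset.mem_filter, Set.Finite.mem_toFinset, Finset.mem_univ, true_and,
        Set.mem_setOf_eq]
      tauto
    rw [heq]
    have hωmem : ω ∈ toMeasurable P (⋂ e ∈ s₀, {ω' | e ∈ (G ω').edgeSet}) := by
      apply subset_toMeasurable
      simp only [Set.mem_iInter, Set.mem_setOf_eq]
      intro e he
      rw [hs₀def, Finset.mem_filter] at he
      exact he.2
    have hval : Real.exp (θ * ∑ e ∈ s₀, (elen e : ℝ)) = ∏ e ∈ s₀, F e := by
      rw [Finset.mul_sum, Real.exp_sum]
    rw [hval, hhdef]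
    have := Finset.single_le_sum (f := fun s =>
      (toMeasurable P (⋂ e ∈ s, {ω' | e ∈ (G ω').edgeSet})).indicator
        (fun _ => ∏ e ∈ s, F e) ω)
      (fun s _ => Set.indicator_nonneg (fun _ _ => Finset.prod_nonneg fun e _ => hFnn e) ω)
      hs₀T
    simp only at this ⊢
    rwa [Set.indicator_of_mem hωmem] at this
  have step1 : ∫ ω, Real.exp (θ * ∑ e ∈ ((G ω).edgeSet.toFinite.toFinset).filter
      (fun e => (N : ℝ) ^ δ ≤ (elen e : ℝ)), (elen e : ℝ)) ∂P ≤ ∫ ω, hfun ω ∂P :=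
    integral_mono_of_nonneg (Filter.Eventually.of_forall fun ω => (Real.exp_pos _).le)
      hint (Filter.Eventually.of_forall hle)
  have step2 : ∫ ω, hfun ω ∂P = ∑ s ∈ T.powerset,
      (P (toMeasurable P (⋂ e ∈ s, {ω' | e ∈ (G ω').edgeSet}))).toReal * ∏ e ∈ s, F e := by
    simp only [hhdef]
    rw [integral_finset_sum _ hintegrable]
    refine Finset.sum_congr rfl fun s hs => ?_
    rw [integral_indicator_const _ (measurableSet_toMeasurable _ _), smul_eq_mul]
    rfl
  have hterm : ∀ s ∈ T.powerset,
      (P (toMeasurable P (⋂ e ∈ s, {ω' | e ∈ (G ω').edgeSet}))).toReal * ∏ e ∈ s, F e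
      = ∏ e ∈ s, Real.exp (-(ε * (elen e : ℝ))) := by
    intro s hs
    have hsub := Finset.mem_powerset.mp hs
    rw [measure_toMeasurable, key s hsub, ENNReal.toReal_prod, ← Finset.prod_mul_distrib]
    refine Finset.prod_congr rfl fun e he => ?_
    rw [hprob e (hT1 e (hsub he)), ENNReal.toReal_ofReal (Real.exp_nonneg _), hFdef,
      ← Real.exp_add]
    congr 1
    rw [hθdef]
    ring
  have step3 : ∏ e ∈ T, (Real.exp (-(ε * (elen e : ℝ))) + 1)
      = ∑ s ∈ T.powerset, ∏ e ∈ s, Real.exp (-(ε * (elen e : ℝ))) := by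
    rw [Finset.prod_add]
    exact Finset.sum_congr rfl fun s _ => by simp
  have step4 : ∏ e ∈ T, (Real.exp (-(ε * (elen e : ℝ))) + 1)
      ≤ Real.exp (∑ e ∈ T, Real.exp (-(ε * (elen e : ℝ)))) := by
    rw [Real.exp_sum]
    refine Finset.prod_le_prod (fun e _ => by positivity) (fun e _ => ?_)
    have := Real.add_one_le_exp (Real.exp (-(ε * (elen e : ℝ))))
    linarith
  have step5 : ∑ e ∈ T, Real.exp (-(ε * (elen e : ℝ))) ≤ Real.log 2 := by
    have hbound : ∀ e ∈ T, Real.exp (-(ε * (elen e : ℝ)))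
        ≤ Real.exp (-(N : ℝ) ^ (δ - δ')) := by
      intro e he
      apply Real.exp_le_exp.mpr
      have h1 : (N : ℝ) ^ (δ - δ') = ε * (N : ℝ) ^ δ := by
        rw [hεdef, ← Real.rpow_add hNpos]
        congr 1
        ring
      have h2 := mul_le_mul_of_nonneg_left (hTlen e he) hε.le
      rw [h1]
      linarith
    have hcard : (T.card : ℝ) ≤ ((N : ℝ)) ^ (2 : ℕ) := by
      have hc1 : T.card ≤ N * N := by
        calc T.card ≤ Finset.univ.card := by rw [hTdef]; exact Finset.card_filter_le _ _
          _ = Fintype.card (Sym2 (Fin N)) := Finset.card_univ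
          _ = Nat.choose (N + 1) 2 := by rw [Sym2.card, Fintype.card_fin]
          _ = (N + 1) * N / 2 := by rw [Nat.choose_two_right]; simp
          _ ≤ N * N * 2 / 2 := Nat.div_le_div_right (by nlinarith)
          _ = N * N := Nat.mul_div_cancel _ (by norm_num)
      calc (T.card : ℝ) ≤ ((N * N : ℕ) : ℝ) := by exact_mod_cast hc1
        _ = ((N : ℝ)) ^ (2 : ℕ) := by push_cast; ring
    calc ∑ e ∈ T, Real.exp (-(ε * (elen e : ℝ)))
        ≤ ∑ _e ∈ T, Real.exp (-(N : ℝ) ^ (δ - δ')) := Finset.sum_le_sum hbound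
      _ = (T.card : ℝ) * Real.exp (-(N : ℝ) ^ (δ - δ')) := by
          rw [Finset.sum_const, nsmul_eq_mul]
      _ ≤ ((N : ℝ)) ^ (2 : ℕ) * Real.exp (-(N : ℝ) ^ (δ - δ')) :=
          mul_le_mul_of_nonneg_right hcard (Real.exp_nonneg _)
      _ ≤ Real.log 2 := hM N hNM
  calc ∫ ω, Real.exp (θ * ∑ e ∈ ((G ω).edgeSet.toFinite.toFinset).filter
        (fun e => (N : ℝ) ^ δ ≤ (elen e : ℝ)), (elen e : ℝ)) ∂P
      ≤ ∫ ω, hfun ω ∂P := step1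
    _ = ∑ s ∈ T.powerset,
        (P (toMeasurable P (⋂ e ∈ s, {ω' | e ∈ (G ω').edgeSet}))).toReal
          * ∏ e ∈ s, F e := step2
    _ = ∑ s ∈ T.powerset, ∏ e ∈ s, Real.exp (-(ε * (elen e : ℝ))) :=
        Finset.sum_congr rfl hterm
    _ = ∏ e ∈ T, (Real.exp (-(ε * (elen e : ℝ))) + 1) := step3.symm
    _ ≤ Real.exp (∑ e ∈ T, Real.exp (-(ε * (elen e : ℝ)))) := step4
    _ ≤ Real.exp (Real.log 2) := Real.exp_le_exp.mpr step5
    _ = 2 := Real.exp_log (by norm_num)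
end

section
/- Let p ∈ [1,∞], k ∈ ℕ with k ≥ 1, η ∈ (1/(k+1), 1/k), and δ ∈ (0, 1 − kη). Define ζ_{p,δ}(η) = p(1 − kη − δ)/(k+p) if p < ∞, and ζ_{∞,δ}(η) = 1 − kη − δ. Then for all sufficiently large N and every graph g = (V_N, E_N) ∈ 𝒢_N: if ℋ_p(g) ≤ N^η, then Σ_{e ∈ E_N, |e| ≥ N^δ} |e| ≥ k·N − N^{1−ζ_{p,δ}(η)}·(log N)^{6k}. -/
open scoped Classical ENNReal

/-- The ℓ^p-average path length of a graph on `Fin N`, for finite `p`. -/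
noncomputable def Hp {N : ℕ} (g : SimpleGraph (Fin N)) (p : ℝ) : ℝ :=
  ((∑ x : Fin N, ∑ y : Fin N, (g.dist x y : ℝ) ^ p) / (N : ℝ) ^ 2) ^ (1 / p)

/-- The diameter of a graph on `Fin N`. -/
noncomputable def Hinf {N : ℕ} (g : SimpleGraph (Fin N)) : ℕ :=
  Finset.univ.sup (fun q : Fin N × Fin N => g.dist q.1 q.2)

/-- The ℓ^p-average path length for `p ∈ [1,∞]`. -/
noncomputable def HpE {N : ℕ} (g : SimpleGraph (Fin N)) (p : ℝ≥0∞) : ℝ :=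
  if p = ⊤ then (Hinf g : ℝ) else Hp g p.toReal


namespace Stmt16aux

variable {N : ℕ}

def lof (e : Sym2 (Fin N)) : ℕ :=
  Sym2.lift ⟨fun (x y : Fin N) => min (x : ℕ) (y : ℕ), fun a b => by simp [Nat.min_comm]⟩ e

def hif (e : Sym2 (Fin N)) : ℕ :=
  Sym2.lift ⟨fun (x y : Fin N) => max (x : ℕ) (y : ℕ), fun a b => by simp [Nat.max_comm]⟩ e

@[simp] lemma lof_mk (a b : Fin N) : lof s(a, b) = min (a : ℕ) (b : ℕ) := rfl
@[simp] lemma hif_mk (a b : Fin N) : hif s(a, b) = max (a : ℕ) (b : ℕ) := rfl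
@[simp] lemma elen_mk (a b : Fin N) : elen s(a, b) = max (a : ℕ) (b : ℕ) - min (a : ℕ) (b : ℕ) := rfl

lemma elen_eq (e : Sym2 (Fin N)) : elen e = hif e - lof e := by
  induction e using Sym2.ind with
  | _ a b => rfl

lemma hif_lt (e : Sym2 (Fin N)) : hif e < N := by
  induction e using Sym2.ind with
  | _ a b => simp [hif, Nat.max_lt, a.isLt, b.isLt]

def crossQ (σ : ℕ) (e : Sym2 (Fin N)) : Prop := lof e ≤ σ ∧ σ < hif e

lemma crossQ_mk_iff (a b : Fin N) (σ : ℕ) :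
    crossQ σ s(a, b) ↔ (((a : ℕ) ≤ σ ∧ σ < (b : ℕ)) ∨ ((b : ℕ) ≤ σ ∧ σ < (a : ℕ))) := by
  unfold crossQ
  simp only [lof_mk, hif_mk]
  omega

/-- parity of crossings of a cut by a walk -/
lemma walk_parity {g : SimpleGraph (Fin N)} {x y : Fin N} (W : g.Walk x y) (σ : ℕ) :
    ((W.edges.filter (fun e => decide (crossQ σ e))).length
      + (if (x : ℕ) ≤ σ then 1 else 0) + (if (y : ℕ) ≤ σ then 1 else 0)) % 2 = 0 := by
  induction W with
  | nil =>
      simp only [SimpleGraph.Walk.edges_nil, List.filter_nil, List.length_nil]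
      split <;> simp
  | @cons u v w h W ih =>
      rw [SimpleGraph.Walk.edges_cons]
      have hpos : crossQ σ s(u, v) →
          (List.filter (fun e => decide (crossQ σ e)) (s(u, v) :: W.edges)).length
            = (List.filter (fun e => decide (crossQ σ e)) W.edges).length + 1 := by
        intro hc
        rw [List.filter_cons, if_pos (by simpa using hc)]
        simp
      have hneg : ¬ crossQ σ s(u, v) →
          (List.filter (fun e => decide (crossQ σ e)) (s(u, v) :: W.edges)).length
            = (List.filter (fun e => decide (crossQ σ e)) W.edges).length := by
        intro hc
        rw [List.filter_cons, if_neg (by simpa using hc)]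
      by_cases h2 : (u : ℕ) ≤ σ <;> by_cases h3 : (v : ℕ) ≤ σ <;>
        by_cases h4 : (w : ℕ) ≤ σ <;>
        simp only [h2, h3, h4, if_true, if_false, if_pos, if_neg] at ih ⊢ <;>
        first
          | (rw [hneg (by rw [crossQ_mk_iff]; omega)]; omega)
          | (rw [hpos (by rw [crossQ_mk_iff]; omega)]; omega)


variable (g : SimpleGraph (Fin N))

noncomputable def Edg : Finset (Sym2 (Fin N)) := g.edgeSet.toFinite.toFinset

lemma mem_Edg (e : Sym2 (Fin N)) : e ∈ Edg g ↔ e ∈ g.edgeSet := Set.Finite.mem_toFinset _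

noncomputable def LEs (T : ℕ) : Finset (Sym2 (Fin N)) := (Edg g).filter (fun e => T ≤ elen e)

noncomputable def ccount (T σ : ℕ) : ℕ := ((LEs g T).filter (fun e => crossQ σ e)).card

def vtx (hN : 0 < N) (σ : ℕ) : Fin N := ⟨σ % N, Nat.mod_lt _ hN⟩

lemma vtx_val (hN : 0 < N) (σ : ℕ) (h : σ < N) : ((vtx hN σ : Fin N) : ℕ) = σ := Nat.mod_eq_of_lt h

variable (hN : 0 < N)

def Rok (Λ : ℕ) (σ : ℕ) : Prop :=
  ∃ v : Fin N, 3 * N ≤ 4 * (v : ℕ) ∧ g.dist (vtx hN σ) v ≤ Λ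

def Lok (Λ : ℕ) (σ : ℕ) : Prop :=
  ∃ v : Fin N, 4 * ((v : ℕ) + 1) ≤ N ∧ g.dist (vtx hN (σ + 1)) v ≤ Λ

noncomputable def SSet (T Λ : ℕ) (F : Finset (Sym2 (Fin N))) (j : ℕ) : Finset ℕ :=
  (Finset.range (N - 1)).filter (fun σ =>
    (∀ e ∈ F, crossQ σ e) ∧ ccount g T σ ≤ F.card + j ∧ Rok g hN Λ σ ∧ Lok g hN Λ σ)

def Afun (Λ T : ℕ) : ℕ → ℕ
  | 0 => 4 * (Λ * T + Λ * 0) + 2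
  | j + 1 => 4 * (Λ * T + Λ * Afun Λ T j) + 2

/-- the set of cuts "handled" by a walk -/
noncomputable def HSW (T : ℕ) (F : Finset (Sym2 (Fin N))) (R : Sym2 (Fin N) → Finset ℕ)
    {a b : Fin N} (W : g.Walk a b) : Finset ℕ :=
  ((W.edges.toFinset.filter (fun f => elen f < T)).biUnion
      (fun f => (Finset.range (N - 1)).filter (fun σ' => crossQ σ' f)))
    ∪ ((W.edges.toFinset.filter (fun f => T ≤ elen f ∧ f ∉ F)).biUnion R)

lemma cross_card_le (f : Sym2 (Fin N)) :
    ((Finset.range (N - 1)).filter (fun σ' => crossQ σ' f)).card ≤ elen f := by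
  have hsub : ((Finset.range (N - 1)).filter (fun σ' => crossQ σ' f)) ⊆
      Finset.Ico (lof f) (hif f) := by
    intro σ hσ
    simp only [Finset.mem_filter, Finset.mem_range] at hσ
    exact Finset.mem_Ico.2 hσ.2
  calc _ ≤ (Finset.Ico (lof f) (hif f)).card := Finset.card_le_card hsub
    _ = hif f - lof f := Nat.card_Ico _ _
    _ = elen f := (elen_eq f).symm

lemma HSW_card (T Λ B : ℕ) (F : Finset (Sym2 (Fin N))) (R : Sym2 (Fin N) → Finset ℕ)
    (hRcard : ∀ f, f ∈ g.edgeSet → T ≤ elen f → f ∉ F → (R f).card ≤ B)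
    {a b : Fin N} (W : g.Walk a b) (hlen : W.length ≤ Λ) :
    (HSW g T F R W).card ≤ Λ * T + Λ * B := by
  have hedlen : W.edges.toFinset.card ≤ Λ := by
    calc W.edges.toFinset.card ≤ W.edges.length := W.edges.toFinset_card_le
      _ = W.length := W.length_edges
      _ ≤ Λ := hlen
  have h1 : ((W.edges.toFinset.filter (fun f => elen f < T)).biUnion
      (fun f => (Finset.range (N - 1)).filter (fun σ' => crossQ σ' f))).card ≤ Λ * T := by
    calc _ ≤ ∑ f ∈ W.edges.toFinset.filter (fun f => elen f < T),
          ((Finset.range (N - 1)).filter (fun σ' => crossQ σ' f)).card :=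
        Finset.card_biUnion_le
      _ ≤ ∑ _f ∈ W.edges.toFinset.filter (fun f => elen f < T), T := by
          apply Finset.sum_le_sum
          intro f hf
          simp only [Finset.mem_filter] at hf
          exact le_trans (cross_card_le f) (le_of_lt hf.2)
      _ = (W.edges.toFinset.filter (fun f => elen f < T)).card * T := by
          rw [Finset.sum_const, smul_eq_mul]
      _ ≤ Λ * T := by
          apply Nat.mul_le_mul_right
          exact le_trans (Finset.card_filter_le _ _) hedlen
  have h2 : ((W.edges.toFinset.filter (fun f => T ≤ elen f ∧ f ∉ F)).biUnion R).card ≤ Λ * B := by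
    calc _ ≤ ∑ f ∈ W.edges.toFinset.filter (fun f => T ≤ elen f ∧ f ∉ F), (R f).card :=
        Finset.card_biUnion_le
      _ ≤ ∑ _f ∈ W.edges.toFinset.filter (fun f => T ≤ elen f ∧ f ∉ F), B := by
          apply Finset.sum_le_sum
          intro f hf
          simp only [Finset.mem_filter, List.mem_toFinset] at hf
          exact hRcard f (W.edges_subset_edgeSet hf.1) hf.2.1 hf.2.2
      _ = (W.edges.toFinset.filter (fun f => T ≤ elen f ∧ f ∉ F)).card * B := by
          rw [Finset.sum_const, smul_eq_mul]
      _ ≤ Λ * B := by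
          apply Nat.mul_le_mul_right
          exact le_trans (Finset.card_filter_le _ _) hedlen
  calc (HSW g T F R W).card ≤ _ + _ := Finset.card_union_le _ _
    _ ≤ Λ * T + Λ * B := Nat.add_le_add h1 h2


lemma mem_HSW (T Λ j : ℕ) (F : Finset (Sym2 (Fin N))) (R : Sym2 (Fin N) → Finset ℕ)
    (hRmem : ∀ σ f, σ ∈ SSet g hN T Λ F j → f ∈ g.edgeSet → T ≤ elen f → f ∉ F →
      crossQ σ f → σ ∈ R f)
    {a b : Fin N} (W : g.Walk a b) (σ' : ℕ) (hσ' : σ' ∈ SSet g hN T Λ F j)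
    (hpar : ((W.edges.filter (fun f => decide (f ∈ F))).length
      + (if (a : ℕ) ≤ σ' then 1 else 0) + (if (b : ℕ) ≤ σ' then 1 else 0)) % 2 = 1) :
    σ' ∈ HSW g T F R W := by
  have hσ'' := hσ'
  simp only [SSet, Finset.mem_filter, Finset.mem_range] at hσ''
  obtain ⟨hrng, hcrossF, -, -⟩ := hσ''
  have hparity := walk_parity W σ'
  -- split the crossing count
  have hsplit : (W.edges.filter (fun e => decide (crossQ σ' e))).length
      = ((W.edges.filter (fun e => decide (crossQ σ' e))).filter (fun f => decide (f ∈ F))).length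
      + ((W.edges.filter (fun e => decide (crossQ σ' e))).filter
          (fun f => !decide (f ∈ F))).length := by
    have := List.length_eq_length_filter_add (l := W.edges.filter (fun e => decide (crossQ σ' e))) (fun f => decide (f ∈ F))
    simpa using this
  have hFeq : ((W.edges.filter (fun e => decide (crossQ σ' e))).filter
      (fun f => decide (f ∈ F))).length = (W.edges.filter (fun f => decide (f ∈ F))).length := by
    rw [List.filter_filter]
    apply congrArg
    apply List.filter_congr
    intro f _
    by_cases hf : f ∈ F
    · simp [hf, hcrossF f hf]
    · simp [hf]
  have hodd : ((W.edges.filter (fun e => decide (crossQ σ' e))).filter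
      (fun f => !decide (f ∈ F))).length % 2 = 1 := by omega
  have hpos : 0 < ((W.edges.filter (fun e => decide (crossQ σ' e))).filter
      (fun f => !decide (f ∈ F))).length := by omega
  obtain ⟨f, hfmem⟩ := List.exists_mem_of_length_pos hpos
  rw [List.mem_filter, List.mem_filter] at hfmem
  obtain ⟨⟨hfW, hfcross⟩, hfnot⟩ := hfmem
  have hfcross' : crossQ σ' f := of_decide_eq_true hfcross
  have hfnotF : f ∉ F := by
    intro hc
    simp [hc] at hfnot
  have hfedge : f ∈ g.edgeSet := W.edges_subset_edgeSet hfW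
  by_cases hshort : elen f < T
  · apply Finset.mem_union_left
    apply Finset.mem_biUnion.2
    refine ⟨f, ?_, ?_⟩
    · simp only [Finset.mem_filter, List.mem_toFinset]
      exact ⟨hfW, hshort⟩
    · simp only [Finset.mem_filter, Finset.mem_range]
      exact ⟨hrng, hfcross'⟩
  · apply Finset.mem_union_right
    apply Finset.mem_biUnion.2
    refine ⟨f, ?_, hRmem σ' f hσ' hfedge (le_of_not_gt hshort) hfnotF hfcross'⟩
    simp only [Finset.mem_filter, List.mem_toFinset]
    exact ⟨hfW, le_of_not_gt hshort, hfnotF⟩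


lemma mem_SSet_iff (T Λ j : ℕ) (F : Finset (Sym2 (Fin N))) (σ : ℕ) :
    σ ∈ SSet g hN T Λ F j ↔ σ ∈ Finset.range (N - 1) ∧ (∀ e ∈ F, crossQ σ e) ∧
      ccount g T σ ≤ F.card + j ∧ Rok g hN Λ σ ∧ Lok g hN Λ σ := by
  simp only [SSet, Finset.mem_filter]

lemma part1 (T Λ j B : ℕ) (F : Finset (Sym2 (Fin N)))
    (hconn : ∀ x y : Fin N, g.Reachable x y)
    (R : Sym2 (Fin N) → Finset ℕ)
    (hRcard : ∀ f, f ∈ g.edgeSet → T ≤ elen f → f ∉ F → (R f).card ≤ B)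
    (hRmem : ∀ σ f, σ ∈ SSet g hN T Λ F j → f ∈ g.edgeSet → T ≤ elen f → f ∉ F →
      crossQ σ f → σ ∈ R f) :
    ((SSet g hN T Λ F j).filter (fun σ => 4 * σ < 3 * N)).card ≤ 2 * (Λ * T + Λ * B) + 1 := by
  classical
  set S1 := (SSet g hN T Λ F j).filter (fun σ => 4 * σ < 3 * N) with hS1def
  have hS1sub : S1 ⊆ SSet g hN T Λ F j := Finset.filter_subset _ _
  have hwalks : ∀ σ : ℕ, ∃ (v : Fin N) (W : g.Walk (vtx hN σ) v),
      σ ∈ S1 → (3 * N ≤ 4 * (v : ℕ) ∧ W.length ≤ Λ) := by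
    intro σ
    by_cases h : σ ∈ S1
    · have hs := (mem_SSet_iff g hN T Λ j F σ).1 (hS1sub h)
      obtain ⟨v, hv1, hv2⟩ := hs.2.2.2.1
      obtain ⟨W, hW⟩ := (hconn (vtx hN σ) v).exists_walk_length_eq_dist
      exact ⟨v, W, fun _ => ⟨hv1, by omega⟩⟩
    · exact ⟨vtx hN σ, SimpleGraph.Walk.nil, fun hc => absurd hc h⟩
  choose vf Wf hWf using hwalks
  set cnt : ℕ → ℕ := fun σ => ((Wf σ).edges.filter (fun f => decide (f ∈ F))).length with hcnt
  -- basic facts about members of S1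
  have hmem : ∀ σ ∈ S1, σ < N - 1 ∧ 4 * σ < 3 * N := by
    intro σ hσ
    rw [hS1def] at hσ
    simp only [Finset.mem_filter] at hσ
    have := (mem_SSet_iff g hN T Λ j F σ).1 hσ.1
    exact ⟨Finset.mem_range.1 this.1, hσ.2⟩
  have hvtxval : ∀ σ ∈ S1, ((vtx hN σ : Fin N) : ℕ) = σ := by
    intro σ hσ
    exact vtx_val hN σ (by have := (hmem σ hσ).1; omega)
  -- handled claims
  have hhand : ∀ σ ∈ S1, ∀ σ' ∈ S1,
      ((cnt σ + (if σ ≤ σ' then 1 else 0) + (if ((vf σ : Fin N) : ℕ) ≤ σ' then 1 else 0)) % 2 = 1)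
      → σ' ∈ HSW g T F R (Wf σ) := by
    intro σ hσ σ' hσ' hpar
    apply mem_HSW g hN T Λ j F R hRmem (Wf σ) σ' (hS1sub hσ')
    rw [hvtxval σ hσ]
    exact hpar
  have hvfbig : ∀ σ ∈ S1, ∀ σ' ∈ S1, ¬ ((vf σ : Fin N) : ℕ) ≤ σ' := by
    intro σ hσ σ' hσ'
    have h1 := (hWf σ hσ).1
    have h2 := (hmem σ' hσ').2
    omega
  have hcard : ∀ σ ∈ S1, (HSW g T F R (Wf σ)).card ≤ Λ * T + Λ * B := by
    intro σ hσ
    exact HSW_card g T Λ B F R hRcard (Wf σ) (hWf σ hσ).2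
  by_cases h1 : (S1.filter (fun σ => cnt σ % 2 = 1)).Nonempty
  · set σA := (S1.filter (fun σ => cnt σ % 2 = 1)).max' h1 with hσA
    have hσAS1 : σA ∈ S1 := Finset.mem_of_mem_filter _ ((S1.filter _).max'_mem h1)
    have hσAodd : cnt σA % 2 = 1 := by
      have := (S1.filter (fun σ => cnt σ % 2 = 1)).max'_mem h1
      simp only [Finset.mem_filter] at this
      exact this.2
    have hAmax : ∀ σ ∈ S1, cnt σ % 2 = 1 → σ ≤ σA := by
      intro σ hσ hodd
      have hmem2 : σ ∈ S1.filter (fun τ => cnt τ % 2 = 1) := Finset.mem_filter.2 ⟨hσ, hodd⟩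
      exact Finset.le_max' _ σ hmem2
    have hhandA : ∀ σ' ∈ S1, σ' < σA → σ' ∈ HSW g T F R (Wf σA) := by
      intro σ' hσ' hlt
      apply hhand σA hσAS1 σ' hσ'
      rw [if_neg (by omega), if_neg (hvfbig σA hσAS1 σ' hσ')]
      omega
    by_cases h2 : (S1.filter (fun σ => σA < σ)).Nonempty
    · set σB := (S1.filter (fun σ => σA < σ)).min' h2 with hσB
      have hσBS1 : σB ∈ S1 := Finset.mem_of_mem_filter _ ((S1.filter _).min'_mem h2)
      have hσBgt : σA < σB := by
        have := (S1.filter (fun σ => σA < σ)).min'_mem h2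
        simp only [Finset.mem_filter] at this
        exact this.2
      have hσBeven : cnt σB % 2 = 0 := by
        rcases Nat.mod_two_eq_zero_or_one (cnt σB) with h | h
        · exact h
        · exact absurd (hAmax σB hσBS1 h) (by omega)
      have hsub : S1 ⊆ HSW g T F R (Wf σA) ∪ HSW g T F R (Wf σB) ∪ {σA} := by
        intro σ' hσ'
        rcases lt_trichotomy σ' σA with hlt | heq | hgt
        · exact Finset.mem_union_left _ (Finset.mem_union_left _ (hhandA σ' hσ' hlt))
        · exact Finset.mem_union_right _ (by simp [heq])
        · have hmem2 : σ' ∈ S1.filter (fun τ => σA < τ) := Finset.mem_filter.2 ⟨hσ', hgt⟩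
          have hσ'B : σB ≤ σ' := Finset.min'_le _ σ' hmem2
          apply Finset.mem_union_left
          apply Finset.mem_union_right
          apply hhand σB hσBS1 σ' hσ'
          rw [if_pos hσ'B, if_neg (hvfbig σB hσBS1 σ' hσ')]
          omega
      calc S1.card ≤ _ := Finset.card_le_card hsub
        _ ≤ (HSW g T F R (Wf σA) ∪ HSW g T F R (Wf σB)).card + ({σA} : Finset ℕ).card :=
            Finset.card_union_le _ _
        _ ≤ (HSW g T F R (Wf σA)).card + (HSW g T F R (Wf σB)).card + 1 := by
            have := Finset.card_union_le (HSW g T F R (Wf σA)) (HSW g T F R (Wf σB))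
            simp only [Finset.card_singleton]
            omega
        _ ≤ 2 * (Λ * T + Λ * B) + 1 := by
            have hA := hcard σA hσAS1
            have hB := hcard σB hσBS1
            omega
    · have hsub : S1 ⊆ HSW g T F R (Wf σA) ∪ {σA} := by
        intro σ' hσ'
        rcases lt_trichotomy σ' σA with hlt | heq | hgt
        · exact Finset.mem_union_left _ (hhandA σ' hσ' hlt)
        · exact Finset.mem_union_right _ (by simp [heq])
        · have hmem2 : σ' ∈ S1.filter (fun τ => σA < τ) := Finset.mem_filter.2 ⟨hσ', hgt⟩
          exact absurd ⟨σ', hmem2⟩ h2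
      calc S1.card ≤ _ := Finset.card_le_card hsub
        _ ≤ (HSW g T F R (Wf σA)).card + 1 := by
            have := Finset.card_union_le (HSW g T F R (Wf σA)) ({σA} : Finset ℕ)
            simp only [Finset.card_singleton] at this
            omega
        _ ≤ 2 * (Λ * T + Λ * B) + 1 := by
            have hA := hcard σA hσAS1
            omega
  · by_cases h0 : S1.Nonempty
    · set σB := S1.min' h0 with hσB
      have hσBS1 : σB ∈ S1 := S1.min'_mem h0
      have hσBeven : cnt σB % 2 = 0 := by
        rcases Nat.mod_two_eq_zero_or_one (cnt σB) with h | h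
        · exact h
        · have hmem2 : σB ∈ S1.filter (fun τ => cnt τ % 2 = 1) := Finset.mem_filter.2 ⟨hσBS1, h⟩
          exact absurd ⟨σB, hmem2⟩ h1
      have hsub : S1 ⊆ HSW g T F R (Wf σB) := by
        intro σ' hσ'
        have hσ'B : σB ≤ σ' := Finset.min'_le _ σ' hσ'
        apply hhand σB hσBS1 σ' hσ'
        rw [if_pos hσ'B, if_neg (hvfbig σB hσBS1 σ' hσ')]
        omega
      calc S1.card ≤ _ := Finset.card_le_card hsub
        _ ≤ Λ * T + Λ * B := hcard σB hσBS1
        _ ≤ 2 * (Λ * T + Λ * B) + 1 := by omega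
    · rw [Finset.not_nonempty_iff_eq_empty.1 h0]
      simp


lemma part2 (T Λ j B : ℕ) (F : Finset (Sym2 (Fin N)))
    (hconn : ∀ x y : Fin N, g.Reachable x y)
    (R : Sym2 (Fin N) → Finset ℕ)
    (hRcard : ∀ f, f ∈ g.edgeSet → T ≤ elen f → f ∉ F → (R f).card ≤ B)
    (hRmem : ∀ σ f, σ ∈ SSet g hN T Λ F j → f ∈ g.edgeSet → T ≤ elen f → f ∉ F →
      crossQ σ f → σ ∈ R f) :
    ((SSet g hN T Λ F j).filter (fun σ => ¬ 4 * σ < 3 * N)).card ≤ 2 * (Λ * T + Λ * B) + 1 := by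
  classical
  set S2 := (SSet g hN T Λ F j).filter (fun σ => ¬ 4 * σ < 3 * N) with hS2def
  have hS2sub : S2 ⊆ SSet g hN T Λ F j := Finset.filter_subset _ _
  have hwalks : ∀ σ : ℕ, ∃ (v : Fin N) (W : g.Walk (vtx hN (σ + 1)) v),
      σ ∈ S2 → (4 * ((v : ℕ) + 1) ≤ N ∧ W.length ≤ Λ) := by
    intro σ
    by_cases h : σ ∈ S2
    · have hs := (mem_SSet_iff g hN T Λ j F σ).1 (hS2sub h)
      obtain ⟨v, hv1, hv2⟩ := hs.2.2.2.2
      obtain ⟨W, hW⟩ := (hconn (vtx hN (σ + 1)) v).exists_walk_length_eq_dist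
      exact ⟨v, W, fun _ => ⟨hv1, by omega⟩⟩
    · exact ⟨vtx hN (σ + 1), SimpleGraph.Walk.nil, fun hc => absurd hc h⟩
  choose vf Wf hWf using hwalks
  set cnt : ℕ → ℕ := fun σ => ((Wf σ).edges.filter (fun f => decide (f ∈ F))).length with hcnt
  have hmem : ∀ σ ∈ S2, σ < N - 1 ∧ 3 * N ≤ 4 * σ := by
    intro σ hσ
    rw [hS2def] at hσ
    simp only [Finset.mem_filter] at hσ
    have := (mem_SSet_iff g hN T Λ j F σ).1 hσ.1
    refine ⟨Finset.mem_range.1 this.1, by omega⟩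
  have hvtxval : ∀ σ ∈ S2, ((vtx hN (σ + 1) : Fin N) : ℕ) = σ + 1 := by
    intro σ hσ
    exact vtx_val hN (σ + 1) (by have := (hmem σ hσ).1; omega)
  have hhand : ∀ σ ∈ S2, ∀ σ' ∈ S2,
      ((cnt σ + (if σ + 1 ≤ σ' then 1 else 0)
          + (if ((vf σ : Fin N) : ℕ) ≤ σ' then 1 else 0)) % 2 = 1)
      → σ' ∈ HSW g T F R (Wf σ) := by
    intro σ hσ σ' hσ' hpar
    apply mem_HSW g hN T Λ j F R hRmem (Wf σ) σ' (hS2sub hσ')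
    rw [hvtxval σ hσ]
    exact hpar
  have hvfsmall : ∀ σ ∈ S2, ∀ σ' ∈ S2, ((vf σ : Fin N) : ℕ) ≤ σ' := by
    intro σ hσ σ' hσ'
    have h1 := (hWf σ hσ).1
    have h2 := (hmem σ' hσ').2
    omega
  have hcard : ∀ σ ∈ S2, (HSW g T F R (Wf σ)).card ≤ Λ * T + Λ * B := by
    intro σ hσ
    exact HSW_card g T Λ B F R hRcard (Wf σ) (hWf σ hσ).2
  by_cases h1 : (S2.filter (fun σ => cnt σ % 2 = 0)).Nonempty
  · set σA := (S2.filter (fun σ => cnt σ % 2 = 0)).max' h1 with hσA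
    have hσAS2 : σA ∈ S2 := Finset.mem_of_mem_filter _ ((S2.filter _).max'_mem h1)
    have hσAeven : cnt σA % 2 = 0 := by
      have := (S2.filter (fun σ => cnt σ % 2 = 0)).max'_mem h1
      simp only [Finset.mem_filter] at this
      exact this.2
    have hAmax : ∀ σ ∈ S2, cnt σ % 2 = 0 → σ ≤ σA := by
      intro σ hσ heven
      have hmem2 : σ ∈ S2.filter (fun τ => cnt τ % 2 = 0) := Finset.mem_filter.2 ⟨hσ, heven⟩
      exact Finset.le_max' _ σ hmem2
    have hhandA : ∀ σ' ∈ S2, σ' ≤ σA → σ' ∈ HSW g T F R (Wf σA) := by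
      intro σ' hσ' hle
      apply hhand σA hσAS2 σ' hσ'
      rw [if_neg (by omega), if_pos (hvfsmall σA hσAS2 σ' hσ')]
      omega
    by_cases h2 : (S2.filter (fun σ => σA < σ)).Nonempty
    · set σB := (S2.filter (fun σ => σA < σ)).min' h2 with hσB
      have hσBS2 : σB ∈ S2 := Finset.mem_of_mem_filter _ ((S2.filter _).min'_mem h2)
      have hσBgt : σA < σB := by
        have := (S2.filter (fun σ => σA < σ)).min'_mem h2
        simp only [Finset.mem_filter] at this
        exact this.2
      have hσBodd : cnt σB % 2 = 1 := by
        rcases Nat.mod_two_eq_zero_or_one (cnt σB) with h | h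
        · exact absurd (hAmax σB hσBS2 h) (by omega)
        · exact h
      have hsub : S2 ⊆ HSW g T F R (Wf σA) ∪ HSW g T F R (Wf σB) ∪ {σB} := by
        intro σ' hσ'
        rcases le_or_gt σ' σA with hle | hgt
        · exact Finset.mem_union_left _ (Finset.mem_union_left _ (hhandA σ' hσ' hle))
        · have hmem2 : σ' ∈ S2.filter (fun τ => σA < τ) := Finset.mem_filter.2 ⟨hσ', hgt⟩
          have hσ'B : σB ≤ σ' := Finset.min'_le _ σ' hmem2
          rcases eq_or_lt_of_le hσ'B with heq | hlt
          · exact Finset.mem_union_right _ (by simp [heq.symm])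
          · apply Finset.mem_union_left
            apply Finset.mem_union_right
            apply hhand σB hσBS2 σ' hσ'
            rw [if_pos (by omega), if_pos (hvfsmall σB hσBS2 σ' hσ')]
            omega
      calc S2.card ≤ _ := Finset.card_le_card hsub
        _ ≤ (HSW g T F R (Wf σA) ∪ HSW g T F R (Wf σB)).card + ({σB} : Finset ℕ).card :=
            Finset.card_union_le _ _
        _ ≤ (HSW g T F R (Wf σA)).card + (HSW g T F R (Wf σB)).card + 1 := by
            have := Finset.card_union_le (HSW g T F R (Wf σA)) (HSW g T F R (Wf σB))
            simp only [Finset.card_singleton]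
            omega
        _ ≤ 2 * (Λ * T + Λ * B) + 1 := by
            have hA := hcard σA hσAS2
            have hB := hcard σB hσBS2
            omega
    · have hsub : S2 ⊆ HSW g T F R (Wf σA) := by
        intro σ' hσ'
        rcases le_or_gt σ' σA with hle | hgt
        · exact hhandA σ' hσ' hle
        · have hmem2 : σ' ∈ S2.filter (fun τ => σA < τ) := Finset.mem_filter.2 ⟨hσ', hgt⟩
          exact absurd ⟨σ', hmem2⟩ h2
      calc S2.card ≤ _ := Finset.card_le_card hsub
        _ ≤ Λ * T + Λ * B := hcard σA hσAS2
        _ ≤ 2 * (Λ * T + Λ * B) + 1 := by omega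
  · by_cases h0 : S2.Nonempty
    · set σB := S2.min' h0 with hσB
      have hσBS2 : σB ∈ S2 := S2.min'_mem h0
      have hσBodd : cnt σB % 2 = 1 := by
        rcases Nat.mod_two_eq_zero_or_one (cnt σB) with h | h
        · have hmem2 : σB ∈ S2.filter (fun τ => cnt τ % 2 = 0) := Finset.mem_filter.2 ⟨hσBS2, h⟩
          exact absurd ⟨σB, hmem2⟩ h1
        · exact h
      have hsub : S2 ⊆ HSW g T F R (Wf σB) ∪ {σB} := by
        intro σ' hσ'
        have hσ'B : σB ≤ σ' := Finset.min'_le _ σ' hσ'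
        rcases eq_or_lt_of_le hσ'B with heq | hlt
        · exact Finset.mem_union_right _ (by simp [heq.symm])
        · apply Finset.mem_union_left
          apply hhand σB hσBS2 σ' hσ'
          rw [if_pos (by omega), if_pos (hvfsmall σB hσBS2 σ' hσ')]
          omega
      calc S2.card ≤ _ := Finset.card_le_card hsub
        _ ≤ (HSW g T F R (Wf σB)).card + 1 := by
            have := Finset.card_union_le (HSW g T F R (Wf σB)) ({σB} : Finset ℕ)
            simp only [Finset.card_singleton] at this
            omega
        _ ≤ 2 * (Λ * T + Λ * B) + 1 := by
            have hB := hcard σB hσBS2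
            omega
    · rw [Finset.not_nonempty_iff_eq_empty.1 h0]
      simp


lemma core (T Λ j B : ℕ) (F : Finset (Sym2 (Fin N)))
    (hconn : ∀ x y : Fin N, g.Reachable x y)
    (R : Sym2 (Fin N) → Finset ℕ)
    (hRcard : ∀ f, f ∈ g.edgeSet → T ≤ elen f → f ∉ F → (R f).card ≤ B)
    (hRmem : ∀ σ f, σ ∈ SSet g hN T Λ F j → f ∈ g.edgeSet → T ≤ elen f → f ∉ F →
      crossQ σ f → σ ∈ R f) :
    (SSet g hN T Λ F j).card ≤ 4 * (Λ * T + Λ * B) + 2 := by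
  classical
  have hsplit := Finset.card_filter_add_card_filter_not
    (s := SSet g hN T Λ F j) (p := fun σ => 4 * σ < 3 * N)
  have h1 := part1 g hN T Λ j B F hconn R hRcard hRmem
  have h2 := part2 g hN T Λ j B F hconn R hRcard hRmem
  omega

lemma master (T Λ : ℕ) (hconn : ∀ x y : Fin N, g.Reachable x y) :
    ∀ (j : ℕ) (F : Finset (Sym2 (Fin N))), (∀ e ∈ F, e ∈ g.edgeSet) →
      (∀ e ∈ F, T ≤ elen e) → (SSet g hN T Λ F j).card ≤ Afun Λ T j := by
  intro j
  induction j with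
  | zero =>
      intro F hFsub hFlong
      have h := core g hN T Λ 0 0 F hconn (fun _ => ∅)
        (fun _ _ _ _ => by simp)
        (fun σ f hσ hf hlong hnot hcross => by
          exfalso
          have hσ' := (mem_SSet_iff g hN T Λ 0 F σ).1 hσ
          have hcc : ccount g T σ ≤ F.card := by simpa using hσ'.2.2.1
          have hsub : insert f F ⊆ (LEs g T).filter (fun e => crossQ σ e) := by
            intro e he
            rcases Finset.mem_insert.1 he with rfl | heF
            · refine Finset.mem_filter.2 ⟨Finset.mem_filter.2 ⟨?_, hlong⟩, hcross⟩
              exact (mem_Edg g _).2 hf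
            · refine Finset.mem_filter.2 ⟨Finset.mem_filter.2 ⟨?_, hFlong e heF⟩,
                hσ'.2.1 e heF⟩
              exact (mem_Edg g _).2 (hFsub e heF)
          have hcard := Finset.card_le_card hsub
          rw [Finset.card_insert_of_notMem hnot] at hcard
          have : F.card + 1 ≤ ccount g T σ := hcard
          omega)
      simpa [Afun] using h
  | succ j ih =>
      intro F hFsub hFlong
      have h := core g hN T Λ (j + 1) (Afun Λ T j) F hconn
        (fun f => SSet g hN T Λ (insert f F) j)
        (fun f hf hlong hnot => by
          apply ih (insert f F)
          · intro e he
            rcases Finset.mem_insert.1 he with rfl | heF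
            · exact hf
            · exact hFsub e heF
          · intro e he
            rcases Finset.mem_insert.1 he with rfl | heF
            · exact hlong
            · exact hFlong e heF)
        (fun σ f hσ hf hlong hnot hcross => by
          have hσ' := (mem_SSet_iff g hN T Λ (j + 1) F σ).1 hσ
          apply (mem_SSet_iff g hN T Λ j (insert f F) σ).2
          refine ⟨hσ'.1, ?_, ?_, hσ'.2.2.2.1, hσ'.2.2.2.2⟩
          · intro e he
            rcases Finset.mem_insert.1 he with rfl | heF
            · exact hcross
            · exact hσ'.2.1 e heF
          · rw [Finset.card_insert_of_notMem hnot]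
            have := hσ'.2.2.1
            omega)
      calc (SSet g hN T Λ F (j + 1)).card ≤ 4 * (Λ * T + Λ * Afun Λ T j) + 2 := h
        _ = Afun Λ T (j + 1) := rfl


noncomputable def LonR (Λ : ℕ) : Finset (Fin N) :=
  Finset.univ.filter (fun x => ∀ v : Fin N, 3 * N ≤ 4 * (v : ℕ) → Λ < g.dist x v)

noncomputable def LonL (Λ : ℕ) : Finset (Fin N) :=
  Finset.univ.filter (fun x => ∀ v : Fin N, 4 * ((v : ℕ) + 1) ≤ N → Λ < g.dist x v)

lemma reach_of_ground (hg : ∀ x y : Fin N, (x : ℕ) + 1 = (y : ℕ) → g.Adj x y) :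
    ∀ x y : Fin N, g.Reachable x y := by
  have aux : ∀ (d : ℕ) (x y : Fin N), (y : ℕ) = (x : ℕ) + d → g.Reachable x y := by
    intro d
    induction d with
    | zero =>
        intro x y h
        have : x = y := Fin.ext (by omega)
        exact this ▸ SimpleGraph.Reachable.refl x
    | succ d ih =>
        intro x y h
        have hx : (x : ℕ) + d < N := by have := y.isLt; omega
        have hmid : g.Reachable x ⟨(x : ℕ) + d, hx⟩ := ih x ⟨(x : ℕ) + d, hx⟩ rfl
        have hadj : g.Adj ⟨(x : ℕ) + d, hx⟩ y := hg _ _ (by show (x : ℕ) + d + 1 = (y : ℕ); omega)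
        exact hmid.trans hadj.reachable
  intro x y
  rcases le_total (x : ℕ) (y : ℕ) with h | h
  · exact aux ((y : ℕ) - (x : ℕ)) x y (by omega)
  · exact (aux ((x : ℕ) - (y : ℕ)) y x (by omega)).symm

lemma Afun_le (Λ T : ℕ) : ∀ j, Afun Λ T j ≤ (8 * (Λ + 1)) ^ (j + 1) * (T + 1) := by
  intro j
  induction j with
  | zero =>
      show 4 * (Λ * T + Λ * 0) + 2 ≤ (8 * (Λ + 1)) ^ 1 * (T + 1)
      rw [pow_one]
      nlinarith
  | succ j ih =>
      show 4 * (Λ * T + Λ * Afun Λ T j) + 2 ≤ (8 * (Λ + 1)) ^ (j + 2) * (T + 1)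
      have hBd1 : T + 1 ≤ (8 * (Λ + 1)) ^ (j + 1) * (T + 1) :=
        Nat.le_mul_of_pos_left _ (Nat.pow_pos (by omega))
      have hstep : (8 * (Λ + 1)) ^ (j + 2) * (T + 1)
          = 8 * (Λ + 1) * ((8 * (Λ + 1)) ^ (j + 1) * (T + 1)) := by ring
      rw [hstep]
      nlinarith [ih, hBd1]

lemma keylemma (hN : 0 < N) (T Λ k : ℕ)
    (hg : ∀ x y : Fin N, (x : ℕ) + 1 = (y : ℕ) → g.Adj x y) :
    k * N ≤ (∑ e ∈ LEs g T, elen e)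
      + k * (1 + (8 * (Λ + 1)) ^ k * (T + 1) + (LonR g Λ).card + (LonL g Λ).card) := by
  classical
  have hconn := reach_of_ground g hg
  -- double counting
  have h1 : ∀ e ∈ LEs g T, elen e
      = ((Finset.range (N - 1)).filter (fun σ => crossQ σ e)).card := by
    intro e _
    have hhif : hif e ≤ N - 1 := by have := hif_lt (e := e); omega
    have : (Finset.range (N - 1)).filter (fun σ => crossQ σ e)
        = Finset.Ico (lof e) (hif e) := by
      ext σ
      rw [Finset.mem_filter]
      simp only [Finset.mem_filter, Finset.mem_range, Finset.mem_Ico, crossQ]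
      omega
    rw [this, Nat.card_Ico, elen_eq]
  have hdc : ∑ e ∈ LEs g T, elen e = ∑ σ ∈ Finset.range (N - 1), ccount g T σ := by
    rw [Finset.sum_congr rfl h1]
    simp only [Finset.card_filter]
    rw [Finset.sum_comm]
    apply Finset.sum_congr rfl
    intro σ _
    rw [ccount, Finset.card_filter]
  -- counting deficiency
  have hmin : ∀ σ, min (ccount g T σ) k
      + ((Finset.range k).filter (fun i => ccount g T σ ≤ i)).card = k := by
    intro σ
    have : (Finset.range k).filter (fun i => ccount g T σ ≤ i)
        = Finset.Ico (min (ccount g T σ) k) k := by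
      ext i
      simp only [Finset.mem_filter, Finset.mem_range, Finset.mem_Ico]
      omega
    rw [this, Nat.card_Ico]
    omega
  set Zs : ℕ → Finset ℕ :=
    fun i => (Finset.range (N - 1)).filter (fun σ => ccount g T σ ≤ i) with hZs
  have hZsum : ∑ σ ∈ Finset.range (N - 1),
      ((Finset.range k).filter (fun i => ccount g T σ ≤ i)).card
      = ∑ i ∈ Finset.range k, (Zs i).card := by
    simp only [Finset.card_filter, hZs]
    rw [Finset.sum_comm]
  have hkN1 : k * (N - 1) ≤ (∑ σ ∈ Finset.range (N - 1), ccount g T σ)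
      + ∑ i ∈ Finset.range k, (Zs i).card := by
    rw [← hZsum]
    have : k * (N - 1) = ∑ σ ∈ Finset.range (N - 1), k := by
      rw [Finset.sum_const, smul_eq_mul, Finset.card_range, Nat.mul_comm]
    rw [this, ← Finset.sum_add_distrib]
    apply Finset.sum_le_sum
    intro σ _
    have := hmin σ
    have hminle : min (ccount g T σ) k ≤ ccount g T σ := Nat.min_le_left _ _
    omega
  -- bound each Zs i
  have hZbound : ∀ i, (Zs i).card ≤ Afun Λ T i + (LonR g Λ).card + (LonL g Λ).card := by
    intro i
    have hsub : Zs i ⊆ SSet g hN T Λ ∅ i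
        ∪ (Finset.range (N - 1)).filter (fun σ => ¬ Rok g hN Λ σ)
        ∪ (Finset.range (N - 1)).filter (fun σ => ¬ Lok g hN Λ σ) := by
      intro σ hσ
      rw [hZs] at hσ
      simp only [Finset.mem_filter] at hσ
      by_cases hR : Rok g hN Λ σ
      · by_cases hL : Lok g hN Λ σ
        · apply Finset.mem_union_left
          apply Finset.mem_union_left
          apply (mem_SSet_iff g hN T Λ i ∅ σ).2
          refine ⟨hσ.1, by simp, by simpa using hσ.2, hR, hL⟩
        · exact Finset.mem_union_right _ (Finset.mem_filter.2 ⟨hσ.1, hL⟩)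
      · exact Finset.mem_union_left _
          (Finset.mem_union_right _ (Finset.mem_filter.2 ⟨hσ.1, hR⟩))
    have hbadR : ((Finset.range (N - 1)).filter (fun σ => ¬ Rok g hN Λ σ)).card
        ≤ (LonR g Λ).card := by
      apply Finset.card_le_card_of_injOn (fun σ => vtx hN σ)
      · intro σ hσ
        simp only [Finset.mem_coe, Finset.mem_filter, Finset.mem_range] at hσ
        simp only [Finset.mem_coe, LonR, Finset.mem_filter, Finset.mem_univ, true_and]
        intro v hv
        by_contra hc
        exact hσ.2 ⟨v, hv, by omega⟩
      · intro σ1 h1' σ2 h2' heq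
        simp only [Finset.mem_coe, Finset.mem_filter, Finset.mem_range] at h1' h2'
        have e1 : ((vtx hN σ1 : Fin N) : ℕ) = σ1 := vtx_val hN σ1 (by omega)
        have e2 : ((vtx hN σ2 : Fin N) : ℕ) = σ2 := vtx_val hN σ2 (by omega)
        rw [← e1, ← e2]
        exact congrArg Fin.val heq
    have hbadL : ((Finset.range (N - 1)).filter (fun σ => ¬ Lok g hN Λ σ)).card
        ≤ (LonL g Λ).card := by
      apply Finset.card_le_card_of_injOn (fun σ => vtx hN (σ + 1))
      · intro σ hσ
        simp only [Finset.mem_coe, Finset.mem_filter, Finset.mem_range] at hσ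
        simp only [Finset.mem_coe, LonL, Finset.mem_filter, Finset.mem_univ, true_and]
        intro v hv
        by_contra hc
        exact hσ.2 ⟨v, hv, by omega⟩
      · intro σ1 h1' σ2 h2' heq
        simp only [Finset.mem_coe, Finset.mem_filter, Finset.mem_range] at h1' h2'
        have e1 : ((vtx hN (σ1 + 1) : Fin N) : ℕ) = σ1 + 1 := vtx_val hN _ (by omega)
        have e2 : ((vtx hN (σ2 + 1) : Fin N) : ℕ) = σ2 + 1 := vtx_val hN _ (by omega)
        have : σ1 + 1 = σ2 + 1 := by
          rw [← e1, ← e2]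
          exact congrArg Fin.val heq
        omega
    have hSS : (SSet g hN T Λ ∅ i).card ≤ Afun Λ T i :=
      master g hN T Λ hconn i ∅ (by simp) (by simp)
    calc (Zs i).card ≤ _ := Finset.card_le_card hsub
      _ ≤ (SSet g hN T Λ ∅ i
            ∪ (Finset.range (N - 1)).filter (fun σ => ¬ Rok g hN Λ σ)).card
          + ((Finset.range (N - 1)).filter (fun σ => ¬ Lok g hN Λ σ)).card :=
          Finset.card_union_le _ _
      _ ≤ (SSet g hN T Λ ∅ i).card
          + ((Finset.range (N - 1)).filter (fun σ => ¬ Rok g hN Λ σ)).card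
          + ((Finset.range (N - 1)).filter (fun σ => ¬ Lok g hN Λ σ)).card := by
          have := Finset.card_union_le (SSet g hN T Λ ∅ i)
            ((Finset.range (N - 1)).filter (fun σ => ¬ Rok g hN Λ σ))
          omega
      _ ≤ Afun Λ T i + (LonR g Λ).card + (LonL g Λ).card := by omega
  have hZtot : ∑ i ∈ Finset.range k, (Zs i).card
      ≤ k * ((8 * (Λ + 1)) ^ k * (T + 1) + (LonR g Λ).card + (LonL g Λ).card) := by
    calc ∑ i ∈ Finset.range k, (Zs i).card
        ≤ ∑ i ∈ Finset.range k,
            ((8 * (Λ + 1)) ^ k * (T + 1) + (LonR g Λ).card + (LonL g Λ).card) := by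
          apply Finset.sum_le_sum
          intro i hi
          have h1' := hZbound i
          have h2' : Afun Λ T i ≤ (8 * (Λ + 1)) ^ k * (T + 1) := by
            calc Afun Λ T i ≤ (8 * (Λ + 1)) ^ (i + 1) * (T + 1) := Afun_le Λ T i
              _ ≤ (8 * (Λ + 1)) ^ k * (T + 1) := by
                  apply Nat.mul_le_mul_right
                  apply Nat.pow_le_pow_right (by omega)
                  exact Finset.mem_range.1 hi
          omega
      _ = k * ((8 * (Λ + 1)) ^ k * (T + 1) + (LonR g Λ).card + (LonL g Λ).card) := by
          rw [Finset.sum_const, smul_eq_mul, Finset.card_range]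
  have hNsub : N - 1 + 1 = N := by omega
  have hstart : k * N = k * (N - 1) + k := by
    conv_lhs => rw [← hNsub]
    ring
  calc k * N = k * (N - 1) + k := hstart
    _ ≤ ((∑ σ ∈ Finset.range (N - 1), ccount g T σ)
        + ∑ i ∈ Finset.range k, (Zs i).card) + k := by omega
    _ ≤ ((∑ σ ∈ Finset.range (N - 1), ccount g T σ)
        + k * ((8 * (Λ + 1)) ^ k * (T + 1) + (LonR g Λ).card + (LonL g Λ).card)) + k := by
        omega
    _ = (∑ e ∈ LEs g T, elen e)
        + k * (1 + (8 * (Λ + 1)) ^ k * (T + 1) + (LonR g Λ).card + (LonL g Λ).card) := by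
        rw [hdc]
        ring


lemma FR_card (hN : 16 ≤ N) :
    N / 8 ≤ (Finset.univ.filter (fun v : Fin N => 3 * N ≤ 4 * (v : ℕ))).card := by
  classical
  have h8 : N / 8 * 8 ≤ N := Nat.div_mul_le_self N 8
  have := Finset.card_le_card_of_injOn
    (f := fun i : ℕ => (⟨N - 1 - i, by omega⟩ : Fin N))
    (s := Finset.range (N / 8))
    (t := Finset.univ.filter (fun v : Fin N => 3 * N ≤ 4 * (v : ℕ)))
    (by
      intro i hi
      simp only [Finset.mem_coe, Finset.mem_range] at hi
      simp only [Finset.mem_coe, Finset.mem_filter, Finset.mem_univ, true_and]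
      omega)
    (by
      intro i hi i' hi' heq
      simp only [Finset.mem_coe, Finset.mem_range] at hi hi'
      have := congrArg Fin.val heq
      simp only at this
      omega)
  simpa using this

lemma FL_card (hN : 16 ≤ N) :
    N / 8 ≤ (Finset.univ.filter (fun v : Fin N => 4 * ((v : ℕ) + 1) ≤ N)).card := by
  classical
  have h8 : N / 8 * 8 ≤ N := Nat.div_mul_le_self N 8
  have := Finset.card_le_card_of_injOn
    (f := fun i : ℕ => (⟨i % N, Nat.mod_lt _ (by omega)⟩ : Fin N))
    (s := Finset.range (N / 8))
    (t := Finset.univ.filter (fun v : Fin N => 4 * ((v : ℕ) + 1) ≤ N))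
    (by
      intro i hi
      simp only [Finset.mem_coe, Finset.mem_range] at hi
      simp only [Finset.mem_coe, Finset.mem_filter, Finset.mem_univ, true_and]
      have : i % N = i := Nat.mod_eq_of_lt (by omega)
      omega)
    (by
      intro i hi i' hi' heq
      simp only [Finset.mem_coe, Finset.mem_range] at hi hi'
      have := congrArg Fin.val heq
      simp only at this
      have e1 : i % N = i := Nat.mod_eq_of_lt (by omega)
      have e2 : i' % N = i' := Nat.mod_eq_of_lt (by omega)
      omega)
  simpa using this

lemma markovS {N : ℕ} (g : SimpleGraph (Fin N)) (P η : ℝ) (hP : 0 < P)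
    (hN : (0:ℝ) < (N:ℝ)) (h : Hp g P ≤ (N:ℝ)^η) :
    ∑ x : Fin N, ∑ y : Fin N, (g.dist x y : ℝ)^P ≤ (N:ℝ)^2 * (N:ℝ)^(η*P) := by
  set S : ℝ := ∑ x : Fin N, ∑ y : Fin N, (g.dist x y : ℝ) ^ P with hS
  have hterm_nn : ∀ x y : Fin N, 0 ≤ (g.dist x y : ℝ)^P :=
    fun x y => Real.rpow_nonneg (Nat.cast_nonneg _) _
  have hSnn : 0 ≤ S := by
    rw [hS]
    exact Finset.sum_nonneg (fun x _ => Finset.sum_nonneg (fun y _ => hterm_nn x y))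
  have hN2pos : (0:ℝ) < (N:ℝ)^2 := by positivity
  have hdivnn : (0:ℝ) ≤ S / (N:ℝ)^2 := div_nonneg hSnn (le_of_lt hN2pos)
  have hHp2 : (S / (N:ℝ)^2)^(1/P) ≤ (N:ℝ)^η := h
  have h1 : ((S / (N:ℝ)^2)^(1/P))^P ≤ ((N:ℝ)^η)^P :=
    Real.rpow_le_rpow (Real.rpow_nonneg hdivnn _) hHp2 (le_of_lt hP)
  have h3 : ((S / (N:ℝ)^2)^(1/P))^P = S / (N:ℝ)^2 := by
    rw [← Real.rpow_mul hdivnn, one_div_mul_cancel (ne_of_gt hP), Real.rpow_one]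
  have h2 : ((N:ℝ)^η)^P = (N:ℝ)^(η*P) := (Real.rpow_mul (le_of_lt hN) η P).symm
  rw [h3, h2] at h1
  calc S = S / (N:ℝ)^2 * (N:ℝ)^2 := (div_mul_cancel₀ S (ne_of_gt hN2pos)).symm
    _ ≤ (N:ℝ)^(η*P) * (N:ℝ)^2 := mul_le_mul_of_nonneg_right h1 (le_of_lt hN2pos)
    _ = (N:ℝ)^2 * (N:ℝ)^(η*P) := mul_comm _ _

end Stmt16aux

set_option maxHeartbeats 2000000 in
open Stmt16aux in
theorem stmt16 (p : ℝ≥0∞) (hp : 1 ≤ p) (k : ℕ) (hk : 1 ≤ k) (η δ : ℝ)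
    (hη1 : 1 / ((k : ℝ) + 1) < η) (hη2 : η < 1 / (k : ℝ))
    (hδ0 : 0 < δ) (hδ : δ < 1 - (k : ℝ) * η) :
    ∃ N₀ : ℕ, ∀ N ≥ N₀, ∀ g : SimpleGraph (Fin N),
      (∀ x y : Fin N, (x : ℕ) + 1 = (y : ℕ) → g.Adj x y) →
      HpE g p ≤ (N : ℝ) ^ η →
      (k : ℝ) * (N : ℝ) -
          (N : ℝ) ^ (1 - (if p = ⊤ then 1 - (k : ℝ) * η - δ
            else p.toReal * (1 - (k : ℝ) * η - δ) / ((k : ℝ) + p.toReal))) *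
          (Real.log N) ^ (6 * k)
        ≤ ∑ e ∈ (g.edgeSet.toFinite.toFinset).filter
            (fun e => (N : ℝ) ^ δ ≤ (elen e : ℝ)), (elen e : ℝ) := by
  classical
  have hηpos : 0 < η := lt_trans (by positivity) hη1
  have hkpos : (0:ℝ) < k := by exact_mod_cast hk
  have hkη : 0 < (k:ℝ) * η := by positivity
  have hδ1 : δ < 1 := by nlinarith
  by_cases hptop : p = ⊤
  · -- case p = ⊤
    set C : ℝ := (k : ℝ) * (1 + 3 * 24 ^ k) with hC
    have hEv : ∀ᶠ (n : ℕ) in Filter.atTop, 16 ≤ n ∧ max 1 C ≤ Real.log n :=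
      (Filter.eventually_ge_atTop 16).and
        ((Real.tendsto_log_atTop.comp tendsto_natCast_atTop_atTop).eventually_ge_atTop
          (max 1 C))
    obtain ⟨N₀, hN₀⟩ := Filter.eventually_atTop.1 hEv
    refine ⟨N₀, fun N hNge g hg hH => ?_⟩
    obtain ⟨hN16, hlog⟩ := hN₀ N hNge
    have hN0 : 0 < N := by omega
    have hNR : (1:ℝ) ≤ (N:ℝ) := by exact_mod_cast (by omega : 1 ≤ N)
    have hNRpos : (0:ℝ) < (N:ℝ) := by linarith
    set T := ⌈(N:ℝ)^δ⌉₊ with hT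
    set Λ := ⌈(N:ℝ)^η⌉₊ with hΛ
    have hHinf : (Hinf g : ℝ) ≤ (N:ℝ)^η := by simpa [HpE, hptop] using hH
    have hdistle : ∀ x v : Fin N, g.dist x v ≤ Λ := by
      intro x v
      have h1 : g.dist x v ≤ Hinf g :=
        Finset.le_sup (f := fun q : Fin N × Fin N => g.dist q.1 q.2) (Finset.mem_univ (x, v))
      have h2 : (Hinf g : ℝ) ≤ (Λ:ℝ) := le_trans hHinf (Nat.le_ceil _)
      have h3 : Hinf g ≤ Λ := by exact_mod_cast h2
      omega
    have hLonR : (LonR g Λ : Finset (Fin N)) = ∅ := by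
      apply Finset.eq_empty_of_forall_notMem
      intro x hx
      simp only [LonR, Finset.mem_filter, Finset.mem_univ, true_and] at hx
      have hv : 3 * N ≤ 4 * (((⟨N-1, by omega⟩ : Fin N)) : ℕ) := by
        simp only []
        omega
      exact absurd (hdistle x _) (not_le.2 (hx _ hv))
    have hLonL : (LonL g Λ : Finset (Fin N)) = ∅ := by
      apply Finset.eq_empty_of_forall_notMem
      intro x hx
      simp only [LonL, Finset.mem_filter, Finset.mem_univ, true_and] at hx
      have hv : 4 * (((((⟨0, by omega⟩ : Fin N))) : ℕ) + 1) ≤ N := by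
        simp only []
        omega
      exact absurd (hdistle x _) (not_le.2 (hx _ hv))
    have hkey := keylemma g hN0 T Λ k hg
    rw [hLonR, hLonL] at hkey
    simp only [Finset.card_empty, Nat.add_zero] at hkey
    have hkeyR : (k:ℝ) * (N:ℝ) ≤ (∑ e ∈ LEs g T, (elen e : ℝ))
        + (k:ℝ) * (1 + ((8*(Λ+1))^k * (T+1) : ℕ)) := by
      have := (Nat.cast_le (α := ℝ)).2 hkey
      push_cast at this ⊢
      linarith
    -- bound the error term
    have hΛb : ((Λ:ℝ)+1) ≤ 3*(N:ℝ)^η := by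
      have h1 : (Λ:ℝ) < (N:ℝ)^η + 1 := Nat.ceil_lt_add_one (by positivity)
      have h2 : (1:ℝ) ≤ (N:ℝ)^η := by
        have := Real.rpow_le_rpow_of_exponent_le hNR (le_of_lt hηpos)
        simpa using this
      linarith
    have hTb : ((T:ℝ)+1) ≤ 3*(N:ℝ)^δ := by
      have h1 : (T:ℝ) < (N:ℝ)^δ + 1 := Nat.ceil_lt_add_one (by positivity)
      have h2 : (1:ℝ) ≤ (N:ℝ)^δ := by
        have := Real.rpow_le_rpow_of_exponent_le hNR (le_of_lt hδ0)
        simpa using this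
      linarith
    have hXb : (((8*(Λ+1))^k * (T+1) : ℕ) : ℝ) ≤ 3 * 24^k * (N:ℝ)^((k:ℝ)*η + δ) := by
      push_cast
      have h8 : (8:ℝ)*((Λ:ℝ)+1) ≤ 24*(N:ℝ)^η := by linarith
      have hpow : ((8:ℝ)*((Λ:ℝ)+1))^k ≤ (24*(N:ℝ)^η)^k :=
        pow_le_pow_left₀ (by positivity) h8 k
      have hmulpow : (24*(N:ℝ)^η)^k = 24^k * ((N:ℝ)^η)^k := mul_pow _ _ _
      have hrp : ((N:ℝ)^η)^k = (N:ℝ)^(η * (k:ℝ)) := by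
        rw [← Real.rpow_natCast ((N:ℝ)^η) k, ← Real.rpow_mul (le_of_lt hNRpos)]
      calc (8*((Λ:ℝ)+1))^k * ((T:ℝ)+1) ≤ (24*(N:ℝ)^η)^k * (3*(N:ℝ)^δ) := by
            apply mul_le_mul hpow hTb (by positivity) (by positivity)
        _ = 3 * 24^k * ((N:ℝ)^(η*(k:ℝ)) * (N:ℝ)^δ) := by
            rw [hmulpow, hrp]; ring
        _ = 3 * 24^k * (N:ℝ)^((k:ℝ)*η + δ) := by
            rw [← Real.rpow_add hNRpos]
            ring_nf
    have hone : (1:ℝ) ≤ (N:ℝ)^((k:ℝ)*η + δ) := by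
      have := Real.rpow_le_rpow_of_exponent_le hNR (le_of_lt (by positivity : (0:ℝ) < (k:ℝ)*η + δ))
      simpa using this
    have herr : (k:ℝ) * (1 + ((8*(Λ+1))^k * (T+1) : ℕ)) ≤ C * (N:ℝ)^((k:ℝ)*η + δ) := by
      rw [hC]
      have : (1:ℝ) + ((8*(Λ+1))^k * (T+1) : ℕ) ≤ (1 + 3*24^k) * (N:ℝ)^((k:ℝ)*η + δ) := by
        have h24 : (0:ℝ) ≤ 3 * 24^k * (N:ℝ)^((k:ℝ)*η + δ) := by positivity
        nlinarith [hXb, hone]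
      nlinarith [this, hkpos]
    have hlogN : (1:ℝ) ≤ Real.log N := le_trans (le_max_left _ _) hlog
    have hCle : C ≤ (Real.log N)^(6*k) := by
      calc C ≤ Real.log N := le_trans (le_max_right _ _) hlog
        _ ≤ (Real.log N)^(6*k) := le_self_pow₀ hlogN (by omega)
    have herr2 : C * (N:ℝ)^((k:ℝ)*η + δ) ≤ (N:ℝ)^((k:ℝ)*η + δ) * (Real.log N)^(6*k) := by
      rw [mul_comm ((N:ℝ)^((k:ℝ)*η + δ))]
      apply mul_le_mul_of_nonneg_right hCle (by positivity)
    have hsum : (g.edgeSet.toFinite.toFinset).filter (fun e => (N:ℝ)^δ ≤ (elen e : ℝ))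
        = LEs g T := by
      simp only [LEs, Edg]
      apply Finset.filter_congr
      intro e _
      rw [hT]
      constructor
      · intro h; exact_mod_cast Nat.ceil_le.2 h
      · intro h
        have := Nat.ceil_le.1 h
        exact_mod_cast this
    rw [hsum, if_pos hptop]
    have hexp : 1 - (1 - (k:ℝ)*η - δ) = (k:ℝ)*η + δ := by ring
    rw [hexp]
    linarith [hkeyR, herr, herr2]
  · -- case p finite
    set P := p.toReal with hP
    have hptop' : p ≠ ⊤ := hptop
    have hP1 : (1:ℝ) ≤ P := by
      have := ENNReal.toReal_mono hptop' hp
      simpa using this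
    have hPpos : (0:ℝ) < P := by linarith
    have hkP : (0:ℝ) < (k:ℝ) + P := by linarith
    set Z : ℝ := P * (1 - (k:ℝ)*η - δ) / ((k:ℝ) + P) with hZ
    set θ : ℝ := (1 - δ + P*η) / ((k:ℝ) + P) with hθ
    have hεpos : 0 < 1 - (k:ℝ)*η - δ := by linarith
    have hZpos : 0 < Z := by rw [hZ]; positivity
    have hZle : Z ≤ 1 := by
      rw [hZ, div_le_one hkP]
      nlinarith
    have hθpos : 0 < θ := by
      rw [hθ]
      apply div_pos _ hkP
      nlinarith
    have hid1 : (k:ℝ)*θ + δ = 1 - Z := by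
      rw [hθ, hZ]
      field_simp
      ring
    have hid2 : θ*P = η*P + Z := by
      rw [hθ, hZ]
      field_simp
      ring
    set C : ℝ := (k:ℝ) * (3 * 24^k + 33) with hC
    have hEv : ∀ᶠ (n : ℕ) in Filter.atTop, 16 ≤ n ∧ max 1 C ≤ Real.log n :=
      (Filter.eventually_ge_atTop 16).and
        ((Real.tendsto_log_atTop.comp tendsto_natCast_atTop_atTop).eventually_ge_atTop
          (max 1 C))
    obtain ⟨N₀, hN₀⟩ := Filter.eventually_atTop.1 hEv
    refine ⟨N₀, fun N hNge g hg hH => ?_⟩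
    obtain ⟨hN16, hlog⟩ := hN₀ N hNge
    have hN0 : 0 < N := by omega
    have hNR : (1:ℝ) ≤ (N:ℝ) := by exact_mod_cast (by omega : 1 ≤ N)
    have hNRpos : (0:ℝ) < (N:ℝ) := by linarith
    set T := ⌈(N:ℝ)^δ⌉₊ with hT
    set Λ := ⌈(N:ℝ)^θ⌉₊ with hΛ
    have hHp : Hp g P ≤ (N:ℝ)^η := by simpa [HpE, hptop] using hH
    have hterm_nn : ∀ x y : Fin N, 0 ≤ (g.dist x y : ℝ)^P :=
      fun x y => Real.rpow_nonneg (Nat.cast_nonneg _) _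
    have hSb : (∑ x : Fin N, ∑ y : Fin N, (g.dist x y : ℝ) ^ P)
        ≤ (N:ℝ)^2 * (N:ℝ)^(η*P) := markovS g P η hPpos hNRpos hHp
    have hNθP : (0:ℝ) < (N:ℝ)^(θ*P) := Real.rpow_pos_of_pos hNRpos _
    have hc0 : (0:ℝ) < (N:ℝ)/16 * (N:ℝ)^(θ*P) :=
      mul_pos (div_pos hNRpos (by norm_num)) hNθP
    have hBeq : (16 * (N:ℝ)^(1-Z)) * ((N:ℝ)/16 * (N:ℝ)^(θ*P)) = (N:ℝ)^2 * (N:ℝ)^(η*P) := by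
      have e1 : (16 * (N:ℝ)^(1-Z)) * ((N:ℝ)/16 * (N:ℝ)^(θ*P))
          = ((N:ℝ)^(1-Z) * (N:ℝ)^(θ*P)) * (N:ℝ)^(1:ℝ) := by
        rw [Real.rpow_one]
        ring
      have e2 : (N:ℝ)^2 * (N:ℝ)^(η*P) = (N:ℝ)^((2:ℕ):ℝ) * (N:ℝ)^(η*P) := by
        rw [Real.rpow_natCast]
      rw [e1, e2, ← Real.rpow_add hNRpos, ← Real.rpow_add hNRpos, ← Real.rpow_add hNRpos]
      congr 1
      push_cast
      linarith [hid2]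
    have hmarkov : ∀ (L FF : Finset (Fin N)),
        (∀ x ∈ L, ∀ v ∈ FF, Λ < g.dist x v) → ((N:ℝ)/16 ≤ FF.card) →
        ((L.card : ℝ)) ≤ 16 * (N:ℝ)^(1 - Z) := by
      intro L FF hfar hFF
      have hterm : ∀ x ∈ L, ∀ v ∈ FF, (N:ℝ)^(θ*P) ≤ (g.dist x v : ℝ)^P := by
        intro x hx v hv
        have hd : Λ < g.dist x v := hfar x hx v hv
        have hbase : (N:ℝ)^θ ≤ (g.dist x v : ℝ) := by
          have h1 : (N:ℝ)^θ ≤ (Λ:ℝ) := Nat.le_ceil _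
          have h2 : (Λ:ℝ) ≤ (g.dist x v : ℝ) := by exact_mod_cast le_of_lt hd
          linarith
        calc (N:ℝ)^(θ*P) = ((N:ℝ)^θ)^P := Real.rpow_mul (le_of_lt hNRpos) θ P
          _ ≤ (g.dist x v : ℝ)^P :=
            Real.rpow_le_rpow (by positivity) hbase (le_of_lt hPpos)
      have hsum1 : ((L.card : ℝ)) * ((FF.card : ℝ) * (N:ℝ)^(θ*P))
          ≤ (N:ℝ)^2 * (N:ℝ)^(η*P) := by
        calc ((L.card : ℝ)) * ((FF.card : ℝ) * (N:ℝ)^(θ*P))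
            = ∑ _x ∈ L, ∑ _v ∈ FF, (N:ℝ)^(θ*P) := by
              rw [Finset.sum_const, Finset.sum_const, nsmul_eq_mul, nsmul_eq_mul]
          _ ≤ ∑ x ∈ L, ∑ v ∈ FF, (g.dist x v : ℝ)^P := by
              apply Finset.sum_le_sum
              intro x hx
              apply Finset.sum_le_sum
              intro v hv
              exact hterm x hx v hv
          _ ≤ ∑ x ∈ L, ∑ v : Fin N, (g.dist x v : ℝ)^P := by
              apply Finset.sum_le_sum
              intro x _
              apply Finset.sum_le_sum_of_subset_of_nonneg (Finset.subset_univ _)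
              intro v _ _
              exact hterm_nn x v
          _ ≤ ∑ x : Fin N, ∑ y : Fin N, (g.dist x y : ℝ) ^ P := by
              apply Finset.sum_le_sum_of_subset_of_nonneg (Finset.subset_univ _)
              intro x _ _
              exact Finset.sum_nonneg (fun y _ => hterm_nn x y)
          _ ≤ (N:ℝ)^2 * (N:ℝ)^(η*P) := hSb
      have hstep : ((L.card : ℝ)) * ((N:ℝ)/16 * (N:ℝ)^(θ*P))
          ≤ (16 * (N:ℝ)^(1-Z)) * ((N:ℝ)/16 * (N:ℝ)^(θ*P)) := by
        rw [hBeq]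
        have h4 : ((L.card : ℝ)) * ((N:ℝ)/16 * (N:ℝ)^(θ*P))
            ≤ ((L.card : ℝ)) * ((FF.card : ℝ) * (N:ℝ)^(θ*P)) := by
          apply mul_le_mul_of_nonneg_left _ (Nat.cast_nonneg _)
          exact mul_le_mul_of_nonneg_right hFF (le_of_lt hNθP)
        linarith [hsum1]
      exact le_of_mul_le_mul_right hstep hc0
    have hlonRb : ((LonR g Λ).card : ℝ) ≤ 16 * (N:ℝ)^(1 - Z) := by
      apply hmarkov _ (Finset.univ.filter (fun v : Fin N => 3 * N ≤ 4 * (v:ℕ)))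
      · intro x hx v hv
        simp only [LonR, Finset.mem_filter, Finset.mem_univ, true_and] at hx
        simp only [Finset.mem_filter, Finset.mem_univ, true_and] at hv
        exact hx v hv
      · have h1 : N/8 ≤ (Finset.univ.filter (fun v : Fin N => 3 * N ≤ 4 * (v:ℕ))).card :=
          FR_card (by omega)
        have h2 : N ≤ 16 * (N/8) := by omega
        have h2' : (N:ℝ) ≤ 16 * ((N/8 : ℕ):ℝ) := by exact_mod_cast h2
        have h3 : ((N/8:ℕ):ℝ) ≤ ((Finset.univ.filter
            (fun v : Fin N => 3 * N ≤ 4 * (v:ℕ))).card : ℝ) := by exact_mod_cast h1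
        linarith
    have hlonLb : ((LonL g Λ).card : ℝ) ≤ 16 * (N:ℝ)^(1 - Z) := by
      apply hmarkov _ (Finset.univ.filter (fun v : Fin N => 4 * ((v:ℕ) + 1) ≤ N))
      · intro x hx v hv
        simp only [LonL, Finset.mem_filter, Finset.mem_univ, true_and] at hx
        simp only [Finset.mem_filter, Finset.mem_univ, true_and] at hv
        exact hx v hv
      · have h1 : N/8 ≤ (Finset.univ.filter (fun v : Fin N => 4 * ((v:ℕ) + 1) ≤ N)).card :=
          FL_card (by omega)
        have h2 : N ≤ 16 * (N/8) := by omega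
        have h2' : (N:ℝ) ≤ 16 * ((N/8 : ℕ):ℝ) := by exact_mod_cast h2
        have h3 : ((N/8:ℕ):ℝ) ≤ ((Finset.univ.filter
            (fun v : Fin N => 4 * ((v:ℕ) + 1) ≤ N)).card : ℝ) := by exact_mod_cast h1
        linarith
    have hkey := keylemma g hN0 T Λ k hg
    have hkeyR : (k:ℝ) * (N:ℝ) ≤ (∑ e ∈ LEs g T, (elen e : ℝ))
        + (k:ℝ) * (1 + (((8*(Λ+1))^k * (T+1) : ℕ) : ℝ)
          + ((LonR g Λ).card : ℝ) + ((LonL g Λ).card : ℝ)) := by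
      have := (Nat.cast_le (α := ℝ)).2 hkey
      push_cast at this ⊢
      linarith
    have hΛb : ((Λ:ℝ)+1) ≤ 3*(N:ℝ)^θ := by
      have h1 : (Λ:ℝ) < (N:ℝ)^θ + 1 := Nat.ceil_lt_add_one (by positivity)
      have h2 : (1:ℝ) ≤ (N:ℝ)^θ := by
        have := Real.rpow_le_rpow_of_exponent_le hNR (le_of_lt hθpos)
        simpa using this
      linarith
    have hTb : ((T:ℝ)+1) ≤ 3*(N:ℝ)^δ := by
      have h1 : (T:ℝ) < (N:ℝ)^δ + 1 := Nat.ceil_lt_add_one (by positivity)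
      have h2 : (1:ℝ) ≤ (N:ℝ)^δ := by
        have := Real.rpow_le_rpow_of_exponent_le hNR (le_of_lt hδ0)
        simpa using this
      linarith
    have hXb : (((8*(Λ+1))^k * (T+1) : ℕ) : ℝ) ≤ 3 * 24^k * (N:ℝ)^(1 - Z) := by
      push_cast
      have h8 : (8:ℝ)*((Λ:ℝ)+1) ≤ 24*(N:ℝ)^θ := by linarith
      have hpow : ((8:ℝ)*((Λ:ℝ)+1))^k ≤ (24*(N:ℝ)^θ)^k :=
        pow_le_pow_left₀ (by positivity) h8 k
      have hmulpow : (24*(N:ℝ)^θ)^k = 24^k * ((N:ℝ)^θ)^k := mul_pow _ _ _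
      have hrp : ((N:ℝ)^θ)^k = (N:ℝ)^(θ * (k:ℝ)) := by
        rw [← Real.rpow_natCast ((N:ℝ)^θ) k, ← Real.rpow_mul (le_of_lt hNRpos)]
      calc (8*((Λ:ℝ)+1))^k * ((T:ℝ)+1) ≤ (24*(N:ℝ)^θ)^k * (3*(N:ℝ)^δ) := by
            apply mul_le_mul hpow hTb (by positivity) (by positivity)
        _ = 3 * 24^k * ((N:ℝ)^(θ*(k:ℝ)) * (N:ℝ)^δ) := by
            rw [hmulpow, hrp]; ring
        _ = 3 * 24^k * (N:ℝ)^(1 - Z) := by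
            rw [← Real.rpow_add hNRpos]
            have hexp : θ*(k:ℝ) + δ = 1 - Z := by linear_combination hid1
            rw [hexp]
    have hone : (1:ℝ) ≤ (N:ℝ)^(1 - Z) := by
      have := Real.rpow_le_rpow_of_exponent_le hNR (by linarith : (0:ℝ) ≤ 1 - Z)
      simpa using this
    have herr : (k:ℝ) * (1 + (((8*(Λ+1))^k * (T+1) : ℕ) : ℝ)
        + ((LonR g Λ).card : ℝ) + ((LonL g Λ).card : ℝ)) ≤ C * (N:ℝ)^(1 - Z) := by
      rw [hC]
      have hbody : (1:ℝ) + (((8*(Λ+1))^k * (T+1) : ℕ) : ℝ)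
          + ((LonR g Λ).card : ℝ) + ((LonL g Λ).card : ℝ)
          ≤ (3 * 24^k + 33) * (N:ℝ)^(1 - Z) := by
        nlinarith [hXb, hone, hlonRb, hlonLb]
      nlinarith [hbody, hkpos]
    have hlogN : (1:ℝ) ≤ Real.log N := le_trans (le_max_left _ _) hlog
    have hCle : C ≤ (Real.log N)^(6*k) := by
      calc C ≤ Real.log N := le_trans (le_max_right _ _) hlog
        _ ≤ (Real.log N)^(6*k) := le_self_pow₀ hlogN (by omega)
    have herr2 : C * (N:ℝ)^(1 - Z) ≤ (N:ℝ)^(1 - Z) * (Real.log N)^(6*k) := by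
      rw [mul_comm ((N:ℝ)^(1 - Z))]
      apply mul_le_mul_of_nonneg_right hCle (by positivity)
    have hsum : (g.edgeSet.toFinite.toFinset).filter (fun e => (N:ℝ)^δ ≤ (elen e : ℝ))
        = LEs g T := by
      simp only [LEs, Edg]
      apply Finset.filter_congr
      intro e _
      rw [hT]
      constructor
      · intro h; exact_mod_cast Nat.ceil_le.2 h
      · intro h
        have := Nat.ceil_le.1 h
        exact_mod_cast this
    rw [hsum, if_neg hptop]
    linarith [hkeyR, herr, herr2]
end
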